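/- For every real number r > 0 and every real ε > 0, there exists a finite set S of rational primes such that r − ε < (1/2)·Σ_{p ∈ S} log(p)/(p+1) and Σ_{p ∈ S} log(p)/(p−1) ≤ 2r. -/

import Mathlib

open NumberField

noncomputable section

/-- A fixed algebraic closure of `ℚ`. -/
abbrev Qbar : Type := AlgebraicClosure ℚ

/-- The set of ramification indices of the primes of `𝒪_F` above `p`. -/
def ramIdxSet (p : ℕ) (F : IntermediateField ℚ Qbar) : Set ℕ :=
  {e | ∃ P : Ideal (𝓞 F), P.IsMaximal ∧ (p : 𝓞 F) ∈ P ∧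
        e = Ideal.ramificationIdx' (Ideal.span {(p : ℤ)}) P}

/-- The set of inertia degrees of the primes of `𝒪_F` above `p`. -/
def inertiaDegSet (p : ℕ) (F : IntermediateField ℚ Qbar) : Set ℕ :=
  {f | ∃ P : Ideal (𝓞 F), P.IsMaximal ∧ (p : 𝓞 F) ∈ P ∧
        f = Ideal.inertiaDeg' (Ideal.span {(p : ℤ)}) P}

/-- For `F/ℚ` finite Galois, the common ramification index of primes above `p`
(realized as a supremum, which for a Galois extension is the common value). -/
def eFin (p : ℕ) (F : IntermediateField ℚ Qbar) : ℕ := sSup (ramIdxSet p F)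

/-- For `F/ℚ` finite Galois, the common inertia degree of primes above `p`. -/
def fFin (p : ℕ) (F : IntermediateField ℚ Qbar) : ℕ := sSup (inertiaDegSet p F)

/-- A rational prime `p` splits totally in `F` if every maximal ideal of `𝒪_F` above `p`
has ramification index `1` and inertia degree `1`. -/
def SplitsTotally (p : ℕ) (F : IntermediateField ℚ Qbar) : Prop :=
  ∀ P : Ideal (𝓞 F), P.IsMaximal → (p : 𝓞 F) ∈ P →
    Ideal.ramificationIdx' (Ideal.span {(p : ℤ)}) P = 1 ∧
    Ideal.inertiaDeg' (Ideal.span {(p : ℤ)}) P = 1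

/-- The (possibly infinite) ramification index of a Galois extension `L/ℚ` at `p`. -/
def eInfty (p : ℕ) (L : IntermediateField ℚ Qbar) : ℕ∞ :=
  ⨆ (K : IntermediateField ℚ Qbar) (_ : K ≤ L) (_ : FiniteDimensional ℚ K)
    (_ : IsGalois ℚ K), (eFin p K : ℕ∞)

/-- The (possibly infinite) inertia degree of a Galois extension `L/ℚ` at `p`. -/
def fInfty (p : ℕ) (L : IntermediateField ℚ Qbar) : ℕ∞ :=
  ⨆ (K : IntermediateField ℚ Qbar) (_ : K ≤ L) (_ : FiniteDimensional ℚ K)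
    (_ : IsGalois ℚ K), (fFin p K : ℕ∞)

/-- `𝔖_p(L) = log p / (e_p(L)·(p^{f_p(L)}+1))` if `e_p(L)` and `f_p(L)` are both finite,
and `0` otherwise. -/
def SfrakP (p : ℕ) (L : IntermediateField ℚ Qbar) : ENNReal :=
  if eInfty p L ≠ ⊤ ∧ fInfty p L ≠ ⊤ then
    ENNReal.ofReal (Real.log p /
      (((eInfty p L).toNat : ℝ) * ((p : ℝ) ^ (fInfty p L).toNat + 1)))
  else 0

/-- `𝔖(L) = Σ_p 𝔖_p(L)`. -/
def Sfrak (L : IntermediateField ℚ Qbar) : ENNReal :=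
  ∑' p : Nat.Primes, SfrakP (p : ℕ) L

/-- `p_L` : the smallest odd rational prime whose inertia degree in `L` is `1`. -/
def pOf (L : IntermediateField ℚ Qbar) : ℕ :=
  sInf {q : ℕ | q.Prime ∧ q ≠ 2 ∧ fFin q L = 1}

/-- Property `(𝒟ℒ)` for a finite group `G`. -/
def HasDL (G : Type*) [Group G] : Prop :=
  ∀ L : IntermediateField ℚ Qbar, FiniteDimensional ℚ L → IsGalois ℚ L →
    ∃ K : IntermediateField ℚ Qbar, FiniteDimensional ℚ K ∧ IsGalois ℚ K ∧
      Nonempty ((K ≃ₐ[ℚ] K) ≃* G) ∧ K ⊓ L = ⊥ ∧ 2 ≤ fFin (pOf L) K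

end

/-!
The terms `a_p = log p/(p-1)` tend to `0`, while `Σ_p a_p` diverges since `a_p ≥ 1/p`.
Adding the primes `p ≥ N` one at a time, the partial sums of `a_p` therefore cross into the
window `(2r - δ, 2r]`, where `δ` bounds the step size. For large `p` we also have
`log p/(p+1) = (1 - 2/(p+1)) a_p ≥ (1 - δ) a_p`, so the sum of `log p/(p+1)` over the same
primes exceeds `(1 - δ)(2r - δ)`, which is `> 2(r - ε)` once `δ` is small.
-/

open Filter Topology Finset

theorem exists_sum_range_mem_Ioc {f : ℕ → ℝ} {b δ : ℝ} (hb : 0 ≤ b) (hf : ∀ n, f n ≤ δ)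
    (htop : Tendsto (fun m ↦ ∑ i ∈ range m, f i) atTop atTop) :
    ∃ m, b - δ < ∑ i ∈ range m, f i ∧ ∑ i ∈ range m, f i ≤ b := by
  classical
  have hex : ∃ m, b - δ < ∑ i ∈ range m, f i := (htop.eventually_gt_atTop (b - δ)).exists
  refine ⟨Nat.find hex, Nat.find_spec hex, ?_⟩
  rcases hfind : Nat.find hex with _ | k
  · simpa using hb
  · have hk : ∑ i ∈ range k, f i ≤ b - δ :=
      not_lt.1 (Nat.find_min hex (by omega))
    rw [sum_range_succ]
    linarith [hf k]

namespace Real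

theorem one_div_le_log_div_sub_one {x : ℝ} (hx : 1 < x) : 1 / x ≤ log x / (x - 1) := by
  have hlog : 1 - x⁻¹ ≤ log x := one_sub_inv_le_log_of_pos (by linarith)
  rw [div_le_div_iff₀ (by linarith) (by linarith)]
  calc 1 * (x - 1) = (1 - x⁻¹) * x := by field_simp
    _ ≤ log x * x := by gcongr

theorem one_sub_mul_log_div_sub_one_le {x δ : ℝ} (hx : 1 < x) (hδ : 2 ≤ δ * (x + 1)) :
    (1 - δ) * (log x / (x - 1)) ≤ log x / (x + 1) := by
  have hlog : 0 ≤ log x := log_nonneg hx.le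
  rw [mul_div_assoc', div_le_div_iff₀ (by linarith) (by linarith)]
  nlinarith

theorem eventually_log_div_sub_one_le {δ : ℝ} (hδ : 0 < δ) :
    ∀ᶠ n : ℕ in atTop, log n / (n - 1) ≤ δ ∧
      (1 - δ) * (log n / (n - 1)) ≤ log n / (n + 1) := by
  have hlim : Tendsto (fun x : ℝ ↦ log x / (x - 1)) atTop (𝓝 0) := by
    simpa [sub_eq_add_neg] using tendsto_pow_log_div_mul_add_atTop 1 (-1) 1 one_ne_zero
  have hcast := tendsto_natCast_atTop_atTop (R := ℝ)
  filter_upwards [hcast.eventually (hlim.eventually (ge_mem_nhds hδ)),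
    hcast.eventually (eventually_ge_atTop (max 2 (2 / δ)))] with n hsmall hlarge
  have hn : 1 < (n : ℝ) := by linarith [le_max_left 2 (2 / δ)]
  refine ⟨hsmall, one_sub_mul_log_div_sub_one_le hn ?_⟩
  have : 2 / δ ≤ n := (le_max_right _ _).trans hlarge
  rw [div_le_iff₀ hδ] at this
  linarith

end Real

open Real

theorem not_summable_log_div_sub_one_primes_ge (N : ℕ) :
    ¬ Summable (fun n : ℕ ↦ if n.Prime ∧ N ≤ n then log n / (n - 1) else 0) := by
  intro h
  refine not_summable_one_div_on_primes (h.of_norm_bounded_eventually ?_)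
  rw [Nat.cofinite_eq_atTop]
  filter_upwards [eventually_ge_atTop N] with n hn
  by_cases hp : n.Prime
  · have hn1 : 1 < (n : ℝ) := by exact_mod_cast hp.one_lt
    simpa [hp, hn, abs_of_pos (zero_lt_one.trans hn1)] using one_div_le_log_div_sub_one hn1
  · simp [hp]

/-- For all real `r > 0` and `ε > 0` there is a finite set `S` of primes with
`r − ε < (1/2)·Σ_{p ∈ S} log p/(p+1)` and `Σ_{p ∈ S} log p/(p−1) ≤ 2r`. -/
theorem stmt_19 (r ε : ℝ) (hr : 0 < r) (hε : 0 < ε) :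
    ∃ S : Finset ℕ, (∀ p ∈ S, p.Prime) ∧
      r - ε < (1 / 2) * ∑ p ∈ S, Real.log p / ((p : ℝ) + 1) ∧
      ∑ p ∈ S, Real.log p / ((p : ℝ) - 1) ≤ 2 * r := by
  classical
  set δ := min 1 (2 * ε / (2 * r + 1))
  have hδ : 0 < δ := lt_min one_pos (by positivity)
  have hδε : δ * (2 * r + 1) ≤ 2 * ε := (le_div_iff₀ (by positivity)).1 (min_le_right _ _)
  obtain ⟨N, hN⟩ := eventually_atTop.1 (eventually_log_div_sub_one_le hδ)
  set f := fun n : ℕ ↦ if n.Prime ∧ N ≤ n then log n / (n - 1) else 0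
  have hf_nonneg (n : ℕ) : 0 ≤ f n := by
    by_cases hn : n.Prime ∧ N ≤ n
    · simpa [f, hn] using div_nonneg (log_natCast_nonneg n)
        (sub_nonneg.2 (by exact_mod_cast hn.1.one_lt.le : (1 : ℝ) ≤ n))
    · simp [f, hn]
  have hf_le (n : ℕ) : f n ≤ δ := by
    by_cases hn : n.Prime ∧ N ≤ n
    · simpa [f, hn] using (hN n hn.2).1
    · simpa [f, hn] using hδ.le
  obtain ⟨m, hlow, hhigh⟩ := exists_sum_range_mem_Ioc (by positivity : 0 ≤ 2 * r) hf_le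
    ((not_summable_iff_tendsto_nat_atTop_of_nonneg hf_nonneg).1
      (not_summable_log_div_sub_one_primes_ge N))
  set S := (range m).filter (fun n ↦ n.Prime ∧ N ≤ n)
  have hsum : ∑ p ∈ S, log p / ((p : ℝ) - 1) = ∑ i ∈ range m, f i := sum_filter _ _
  have hcompare : (1 - δ) * ∑ p ∈ S, log p / ((p : ℝ) - 1) ≤ ∑ p ∈ S, log p / ((p : ℝ) + 1) := by
    rw [mul_sum]
    exact sum_le_sum fun p hp ↦ (hN p (mem_filter.1 hp).2.2).2
  refine ⟨S, fun p hp ↦ (mem_filter.1 hp).2.1, ?_, hsum ▸ hhigh⟩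
  rw [hsum] at hcompare
  have hδ1 : δ ≤ 1 := min_le_left _ _
  nlinarith
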